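/- Let u : ℝ² → ℂ be twice continuously differentiable in the light-cone coordinates (x₊, x₋), and let λ ∈ ℂ with λ ≠ 0. Define the matrix-valued functions V₊⁰ = (1/(4λ))·[[1, −e^{2iu}, 0], [−e^{−2iu}, 1, 0], [0, 0, 2]] and V₋⁰ = [[i∂₋u − λ, λ, 0], [λ, −i∂₋u − λ, 0], [0, 0, −2λ]], where ∂± denote ∂/∂x±. Then at each point (x₊, x₋) ∈ ℝ², the zero-curvature condition ∂₊V₋⁰ − ∂₋V₊⁰ + V₋⁰V₊⁰ − V₊⁰V₋⁰ = 0 holds if and only if ∂₊∂₋u = −(1/2)·sin(2u) at that point. -/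

import Mathlib

open Matrix Complex

/-!
Write `E = exp (2 i u)`. Entrywise, `∂₊V₋⁰ = diag(i ∂₊∂₋u, -i ∂₊∂₋u, 0)`. In the commutator
`[V₋⁰, V₊⁰]` the `∂₋u`-part of `V₋⁰` reproduces exactly `∂₋V₊⁰`, while its `λ`-part meets the
factor `1 / (4λ)` of `V₊⁰` and leaves `diag(E - E⁻¹, E⁻¹ - E, 0) / 4`. As
`E - E⁻¹ = 2 i sin (2u)`, the curvature is `i (∂₊∂₋u + sin (2u) / 2) • diag(1, -1, 0)`.
-/

/-- Partial derivative with respect to the first light-cone coordinate `x₊`. -/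
noncomputable def dplus (f : ℝ × ℝ → ℂ) (p : ℝ × ℝ) : ℂ :=
  deriv (fun x => f (x, p.2)) p.1

/-- Partial derivative with respect to the second light-cone coordinate `x₋`. -/
noncomputable def dminus (f : ℝ × ℝ → ℂ) (p : ℝ × ℝ) : ℂ :=
  deriv (fun y => f (p.1, y)) p.2

/-- Entrywise partial derivative `∂₊` of a matrix-valued function. -/
noncomputable def dplusM (V : ℝ × ℝ → Matrix (Fin 3) (Fin 3) ℂ) (p : ℝ × ℝ) :
    Matrix (Fin 3) (Fin 3) ℂ :=
  Matrix.of fun i j => dplus (fun q => V q i j) p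

/-- Entrywise partial derivative `∂₋` of a matrix-valued function. -/
noncomputable def dminusM (V : ℝ × ℝ → Matrix (Fin 3) (Fin 3) ℂ) (p : ℝ × ℝ) :
    Matrix (Fin 3) (Fin 3) ℂ :=
  Matrix.of fun i j => dminus (fun q => V q i j) p

/-- The bosonic body `V₊⁰` of the potential supermatrix `V₊`. -/
noncomputable def Vplus0 (lam : ℂ) (u : ℝ × ℝ → ℂ) (p : ℝ × ℝ) :
    Matrix (Fin 3) (Fin 3) ℂ :=
  (1 / (4 * lam) : ℂ) •
    !![1, -exp (2 * I * u p), 0; -exp (-(2 * I * u p)), 1, 0; 0, 0, 2]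

/-- The bosonic body `V₋⁰` of the potential supermatrix `V₋`. -/
noncomputable def Vminus0 (lam : ℂ) (u : ℝ × ℝ → ℂ) (p : ℝ × ℝ) :
    Matrix (Fin 3) (Fin 3) ℂ :=
  !![I * dminus u p - lam, lam, 0; lam, -(I * dminus u p) - lam, 0; 0, 0, -2 * lam]

theorem Complex.exp_mul_I_sub_exp_neg_mul_I (z : ℂ) :
    exp (z * I) - exp (-(z * I)) = 2 * I * sin z := by
  have h := two_sin z
  rw [neg_mul] at h
  linear_combination (-I) * h + (exp (z * I) - exp (-(z * I))) * I_sq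

section PartialDerivatives

variable {f : ℝ × ℝ → ℂ} {p : ℝ × ℝ}

theorem hasDerivAt_dplus (hf : DifferentiableAt ℝ f p) :
    HasDerivAt (fun x => f (x, p.2)) (dplus f p) p.1 :=
  (hf.comp p.1 ((hasDerivAt_id p.1).prodMk (hasDerivAt_const p.1 p.2)).differentiableAt).hasDerivAt

theorem hasDerivAt_dminus (hf : DifferentiableAt ℝ f p) :
    HasDerivAt (fun y => f (p.1, y)) (dminus f p) p.2 :=
  (hf.comp p.2 ((hasDerivAt_const p.2 p.1).prodMk (hasDerivAt_id p.2)).differentiableAt).hasDerivAt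

theorem dminus_eq_fderiv (hf : DifferentiableAt ℝ f p) : dminus f p = fderiv ℝ f p (0, 1) :=
  (hasDerivAt_dminus hf).unique
    (hf.hasFDerivAt.comp_hasDerivAt p.2 ((hasDerivAt_const p.2 p.1).prodMk (hasDerivAt_id p.2)))

theorem ContDiff.differentiable_dminus (hf : ContDiff ℝ 2 f) : Differentiable ℝ (dminus f) := by
  have hdminus : dminus f = fun q => fderiv ℝ f q (0, 1) :=
    funext fun q => dminus_eq_fderiv (hf.differentiable two_ne_zero q)
  rw [hdminus]
  exact ((hf.fderiv_right le_rfl).clm_apply contDiff_const).differentiable one_ne_zero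

end PartialDerivatives

section Matrices

variable {V : ℝ × ℝ → Matrix (Fin 3) (Fin 3) ℂ} {D : Matrix (Fin 3) (Fin 3) ℂ} {p : ℝ × ℝ}

theorem dplusM_eq_of_hasDerivAt (h : ∀ i j, HasDerivAt (fun x => V (x, p.2) i j) (D i j) p.1) :
    dplusM V p = D :=
  Matrix.ext fun i j => (h i j).deriv

theorem dminusM_eq_of_hasDerivAt (h : ∀ i j, HasDerivAt (fun y => V (p.1, y) i j) (D i j) p.2) :
    dminusM V p = D :=
  Matrix.ext fun i j => (h i j).deriv

end Matrices

section LaxPair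

variable {u : ℝ × ℝ → ℂ} {p : ℝ × ℝ} (lam : ℂ)

theorem dplusM_Vminus0 (hv : DifferentiableAt ℝ (dminus u) p) :
    dplusM (Vminus0 lam u) p =
      !![I * dplus (dminus u) p, 0, 0; 0, -(I * dplus (dminus u) p), 0; 0, 0, 0] := by
  have hw := hasDerivAt_dplus hv
  refine dplusM_eq_of_hasDerivAt fun i j => ?_
  fin_cases i <;> fin_cases j
  all_goals first
    | exact hasDerivAt_const _ _
    | exact (hw.const_mul I).sub_const lam
    | exact (hw.const_mul I).fun_neg.sub_const lam

theorem dminusM_Vplus0 (hu : DifferentiableAt ℝ u p) :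
    dminusM (Vplus0 lam u) p = (1 / (4 * lam)) •
      !![0, -(2 * I * dminus u p * exp (2 * I * u p)), 0;
        2 * I * dminus u p * exp (-(2 * I * u p)), 0, 0; 0, 0, 0] := by
  have hv := hasDerivAt_dminus hu
  have hexp : HasDerivAt (fun y => -exp (2 * I * u (p.1, y)))
      (-(2 * I * dminus u p * exp (2 * I * u p))) p.2 :=
    (hv.const_mul (2 * I)).cexp.fun_neg.congr_deriv (by ring)
  have hexp_neg : HasDerivAt (fun y => -exp (-(2 * I * u (p.1, y))))
      (2 * I * dminus u p * exp (-(2 * I * u p))) p.2 :=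
    (hv.const_mul (2 * I)).fun_neg.cexp.fun_neg.congr_deriv (by ring)
  refine dminusM_eq_of_hasDerivAt fun i j => ?_
  fin_cases i <;> fin_cases j
  all_goals first
    | exact (hasDerivAt_const _ _).const_mul _
    | exact hexp.const_mul _
    | exact hexp_neg.const_mul _

theorem Vminus0_mul_Vplus0_sub_Vplus0_mul_Vminus0 (hlam : lam ≠ 0) :
    Vminus0 lam u p * Vplus0 lam u p - Vplus0 lam u p * Vminus0 lam u p =
      (1 / 4 : ℂ) • !![exp (2 * I * u p) - exp (-(2 * I * u p)), 0, 0;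
        0, -(exp (2 * I * u p) - exp (-(2 * I * u p))), 0; 0, 0, 0] +
      (1 / (4 * lam)) • !![0, -(2 * I * dminus u p * exp (2 * I * u p)), 0;
        2 * I * dminus u p * exp (-(2 * I * u p)), 0, 0; 0, 0, 0] := by
  ext i j
  fin_cases i <;> fin_cases j <;> simp [Vplus0, Vminus0] <;> field_simp <;> ring

theorem curvature_Vminus0_Vplus0_eq_smul (hlam : lam ≠ 0) (hu : DifferentiableAt ℝ u p)
    (hv : DifferentiableAt ℝ (dminus u) p) :
    dplusM (Vminus0 lam u) p - dminusM (Vplus0 lam u) p +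
        Vminus0 lam u p * Vplus0 lam u p - Vplus0 lam u p * Vminus0 lam u p =
      (I * (dplus (dminus u) p + 1 / 2 * sin (2 * u p))) • !![1, 0, 0; 0, -1, 0; 0, 0, 0] := by
  have hsin := exp_mul_I_sub_exp_neg_mul_I (2 * u p)
  rw [mul_right_comm] at hsin
  rw [add_sub_assoc, Vminus0_mul_Vplus0_sub_Vplus0_mul_Vminus0 lam hlam, dplusM_Vminus0 lam hv,
    dminusM_Vplus0 lam hu, sub_add_add_cancel, hsin]
  ext i j
  fin_cases i <;> fin_cases j <;> simp <;> ring

end LaxPair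

/-- for a twice continuously differentiable `u` and `λ ≠ 0`, the
zero-curvature condition `∂₊V₋⁰ − ∂₋V₊⁰ + [V₋⁰, V₊⁰] = 0` holds at a point iff
`∂₊∂₋u = −(1/2)sin(2u)` holds at that point. -/
theorem bosonic_zero_curvature_iff_sineGordon (u : ℝ × ℝ → ℂ) (hu : ContDiff ℝ 2 u)
    (lam : ℂ) (hlam : lam ≠ 0) (p : ℝ × ℝ) :
    (dplusM (Vminus0 lam u) p - dminusM (Vplus0 lam u) p +
        Vminus0 lam u p * Vplus0 lam u p - Vplus0 lam u p * Vminus0 lam u p = 0) ↔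
      dplus (fun q => dminus u q) p = -(1 / 2) * sin (2 * u p) := by
  have hdiag : !![(1 : ℂ), 0, 0; 0, -1, 0; 0, 0, 0] ≠ 0 := fun h =>
    one_ne_zero (congrFun (congrFun h 0) 0)
  rw [curvature_Vminus0_Vplus0_eq_smul lam hlam (hu.differentiable two_ne_zero p)
      (hu.differentiable_dminus p), smul_eq_zero, or_iff_left hdiag, mul_eq_zero,
    or_iff_right I_ne_zero, add_eq_zero_iff_eq_neg, neg_mul]
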